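/- arXiv:1001.4095 — 2 statements merged into one kernel-verified Lean document; each statement's English description precedes it below -/
import Mathlib

section
/- Let G be a finite abelian group generated by two elements, with order R and exponent e, and suppose R divides a positive integer h. Then R/e divides gcd(e, h/e). In particular, if gcd(e, h/e) = 1, then R = e. -/
/-!
The exponent `e` divides `R`, and a commutative group generated by two elements is a quotient of
`(ℤ/e)²`, so `R ∣ e²`. Hence `R / e` divides both `e = e² / e` and `h / e`.
-/

open Subgroup

theorem Nat.div_dvd_gcd_div_of_dvd_mul_self {e R h : ℕ} (heR : e ∣ R) (hRe : R ∣ e * e)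
    (hRh : R ∣ h) : R / e ∣ Nat.gcd e (h / e) := by
  refine Nat.dvd_gcd ?_ (Nat.div_dvd_div heR hRh)
  rcases e.eq_zero_or_pos with rfl | he
  · simp
  · simpa [Nat.mul_div_cancel_left _ he] using Nat.div_dvd_div heR hRe

theorem card_dvd_exponent_pow_card_of_closure_eq_top {G : Type*} [CommGroup G] {S : Finset G}
    (hS : closure (S : Set G) = ⊤) : Nat.card G ∣ Monoid.exponent G ^ S.card :=
  have : Group.FG G := ⟨⟨S, hS⟩⟩
  (card_dvd_exponent_pow_rank G).trans (pow_dvd_pow _ (Group.rank_le hS))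

theorem card_dvd_exponent_sq_of_closure_pair_eq_top {G : Type*} [CommGroup G] [DecidableEq G]
    {x y : G} (hgen : closure {x, y} = ⊤) : Nat.card G ∣ Monoid.exponent G ^ 2 := by
  have hS : closure (({x, y} : Finset G) : Set G) = ⊤ := by simpa using hgen
  exact (card_dvd_exponent_pow_card_of_closure_eq_top hS).trans
    (pow_dvd_pow _ Finset.card_le_two)

theorem stmt_5_general (G : Type*) [CommGroup G]
    (x y : G) (hgen : Subgroup.closure {x, y} = ⊤)
    (R e h : ℕ) (hR : R = Nat.card G) (he : e = Monoid.exponent G)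
    (hdvd : R ∣ h) :
    R / e ∣ Nat.gcd e (h / e) ∧ (Nat.gcd e (h / e) = 1 → R = e) := by
  classical
  subst hR he
  have heR : Monoid.exponent G ∣ Nat.card G := Group.exponent_dvd_nat_card
  have hRe : Nat.card G ∣ Monoid.exponent G * Monoid.exponent G :=
    sq (Monoid.exponent G) ▸ card_dvd_exponent_sq_of_closure_pair_eq_top hgen
  have hquot := Nat.div_dvd_gcd_div_of_dvd_mul_self heR hRe hdvd
  refine ⟨hquot, fun hgcd => ?_⟩
  have hone : Nat.card G / Monoid.exponent G = 1 := Nat.dvd_one.mp (hgcd ▸ hquot)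
  simpa using Nat.eq_mul_of_div_eq_right heR hone

theorem stmt_5 (G : Type*) [CommGroup G] [Finite G]
    (x y : G) (hgen : Subgroup.closure {x, y} = ⊤)
    (R e h : ℕ) (hR : R = Nat.card G) (he : e = Monoid.exponent G)
    (hpos : 0 < h) (hdvd : R ∣ h) :
    R / e ∣ Nat.gcd e (h / e) ∧ (Nat.gcd e (h / e) = 1 → R = e) :=
  stmt_5_general G x y hgen R e h hR he hdvd
end

section
/- Let n be a positive integer whose prime factorization is n = ∏ p_i^{a_i}, and let e be a positive divisor of n. Define h* = ∏ p_i^{e_i − 1}, where for each i, e_i is the minimal integer in [1, a_i] such that e does not divide n/p_i^{e_i}, with the convention e_i − 1 = a_i when e divides n/p_i^{a_i}. Then n / h* = e. -/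
/-!
Since `e ∣ n`, for `k ≤ v_p(n)` the quotient `n / p ^ k` is divisible by `e` exactly when
`v_p(e) + k ≤ v_p(n)`. Hence the least `k` with `e ∤ n / p ^ k` is `v_p(n) - v_p(e) + 1`, and the
convention for `e ∣ n / p ^ v_p(n)` is the case `v_p(e) = 0` of the same formula. So
`h* = ∏ p ^ (v_p(n) - v_p(e)) = n / e`.
-/

namespace Nat

theorem dvd_div_prime_pow_iff {n e p k : ℕ} (hp : p.Prime) (hn : n ≠ 0) (hdvd : e ∣ n)
    (hk : k ≤ n.factorization p) :
    e ∣ n / p ^ k ↔ e.factorization p + k ≤ n.factorization p := by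
  have he : e ≠ 0 := ne_zero_of_dvd_ne_zero hn hdvd
  have hpk : p ^ k ∣ n := (hp.pow_dvd_iff_le_factorization hn).2 hk
  have hpk0 : p ^ k ≠ 0 := pow_ne_zero _ hp.ne_zero
  rw [dvd_div_iff_mul_dvd hpk, mul_comm, ← factorization_le_iff_dvd (mul_ne_zero he hpk0) hn,
    factorization_mul he hpk0, hp.factorization_pow]
  refine ⟨fun h ↦ by simpa using h p, fun h q ↦ ?_⟩
  rcases eq_or_ne p q with rfl | hpq
  · simpa using h
  · simpa [Finsupp.single_apply, hpq] using (factorization_le_iff_dvd he hn).2 hdvd q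

theorem isLeast_not_dvd_div_prime_pow {n e p : ℕ} (hp : p.Prime) (hn : n ≠ 0) (hdvd : e ∣ n)
    (hndvd : ¬ e ∣ n / p ^ n.factorization p) :
    IsLeast {k : ℕ | 1 ≤ k ∧ k ≤ n.factorization p ∧ ¬ e ∣ n / p ^ k}
      (n.factorization p - e.factorization p + 1) := by
  have hle : e.factorization p ≤ n.factorization p :=
    (factorization_le_iff_dvd (ne_zero_of_dvd_ne_zero hn hdvd) hn).2 hdvd p
  have hpos : 0 < e.factorization p := by
    rw [dvd_div_prime_pow_iff hp hn hdvd le_rfl] at hndvd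
    omega
  refine ⟨⟨by omega, by omega, ?_⟩, fun k ⟨_, hk, hndvd_k⟩ ↦ ?_⟩
  · rw [dvd_div_prime_pow_iff hp hn hdvd (by omega)]
    omega
  · rw [dvd_div_prime_pow_iff hp hn hdvd hk] at hndvd_k
    omega

theorem prod_primeFactors_pow_factorization_sub {n e : ℕ} (hn : n ≠ 0) (hdvd : e ∣ n) :
    ∏ p ∈ n.primeFactors, p ^ (n.factorization p - e.factorization p) = n / e := by
  have hq : n / e ≠ 0 := div_ne_zero_iff_of_dvd hdvd |>.2 ⟨hn, ne_zero_of_dvd_ne_zero hn hdvd⟩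
  have hsupp : (n / e).factorization.support ⊆ n.primeFactors := by
    rw [support_factorization]
    exact primeFactors_mono (div_dvd_of_dvd hdvd) hn
  conv_rhs => rw [← prod_factorization_pow_eq_self hq]
  rw [Finsupp.prod_of_support_subset _ hsupp _ (fun _ _ ↦ pow_zero _), factorization_div hdvd]
  rfl

end Nat

theorem stmt_16_general (n e : ℕ) (hn : 0 < n) (hdvd : e ∣ n)
    (f : ℕ → ℕ)
    (hf : ∀ p ∈ n.primeFactors,
      if e ∣ n / p ^ (n.factorization p) then f p = n.factorization p + 1
      else IsLeast {k : ℕ | 1 ≤ k ∧ k ≤ n.factorization p ∧ ¬ e ∣ n / p ^ k} (f p)) :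
    n / (∏ p ∈ n.primeFactors, p ^ (f p - 1)) = e := by
  have hn : n ≠ 0 := hn.ne'
  have hexp : ∀ p ∈ n.primeFactors, f p - 1 = n.factorization p - e.factorization p := by
    intro p hp_mem
    have hp := Nat.prime_of_mem_primeFactors hp_mem
    have hfp := hf p hp_mem
    split_ifs at hfp with hdvd_p
    · have := (Nat.dvd_div_prime_pow_iff hp hn hdvd le_rfl).1 hdvd_p
      omega
    · have := hfp.unique (Nat.isLeast_not_dvd_div_prime_pow hp hn hdvd hdvd_p)
      omega
  rw [Finset.prod_congr rfl fun p hp ↦ by rw [hexp p hp],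
    Nat.prod_primeFactors_pow_factorization_sub hn hdvd, Nat.div_div_self hdvd hn]

theorem stmt_16 (n e : ℕ) (hn : 0 < n) (he : 0 < e) (hdvd : e ∣ n)
    (f : ℕ → ℕ)
    (hf : ∀ p ∈ n.primeFactors,
      if e ∣ n / p ^ (n.factorization p) then f p = n.factorization p + 1
      else IsLeast {k : ℕ | 1 ≤ k ∧ k ≤ n.factorization p ∧ ¬ e ∣ n / p ^ k} (f p)) :
    n / (∏ p ∈ n.primeFactors, p ^ (f p - 1)) = e :=
  stmt_16_general n e hn hdvd f hf
end
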